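/- Fix an integer m ≥ 2, reals h > 0, ε > 0, η ≥ 0, and A ≥ 1. Define, on the space of periodic grid functions φ : (ZMod m) × (ZMod m) → ℝ, F_{c,h}(φ) = h² Σ_{(i,j)} [ (ε⁻²/2) φ(i,j)⁶ + ((ε⁻² + η)/2) φ(i,j)² + (ε²/2) (Δ_h φ)(i,j)² ] + H_h(φ) and F_{e,h}(φ) = h² Σ_{(i,j)} (ε⁻² + η/4 + A) φ(i,j)⁴ + (1 + ηε²/2) h² Σ_{(i,j)} ((𝔇ₓφ)(i,j)² + (𝔇_yφ)(i,j)²) + A h² Σ_{(i,j)} ((𝔇ₓφ)(i,j)² + (𝔇_yφ)(i,j)²)². Then both F_{c,h} and F_{e,h} are strictly convex. -/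

import Mathlib

open Set

/-- The standard discrete Laplacian on periodic grid functions. -/
noncomputable def discreteLaplacian (m : ℕ) [NeZero m] (h : ℝ)
    (u : ZMod m × ZMod m → ℝ) : ZMod m × ZMod m → ℝ :=
  fun p =>
    (u (p.1 + 1, p.2) + u (p.1 - 1, p.2) + u (p.1, p.2 + 1) + u (p.1, p.2 - 1)
      - 4 * u p) / h ^ 2

/-- Center-to-vertex difference in the x direction. -/
noncomputable def Dx (m : ℕ) [NeZero m] (h : ℝ)
    (u : ZMod m × ZMod m → ℝ) : ZMod m × ZMod m → ℝ :=
  fun p => (u (p.1 + 1, p.2 + 1) - u (p.1, p.2 + 1) + u (p.1 + 1, p.2) - u p) / (2 * h)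

/-- Center-to-vertex difference in the y direction. -/
noncomputable def Dy (m : ℕ) [NeZero m] (h : ℝ)
    (u : ZMod m × ZMod m → ℝ) : ZMod m × ZMod m → ℝ :=
  fun p => (u (p.1 + 1, p.2 + 1) - u (p.1 + 1, p.2) + u (p.1, p.2 + 1) - u p) / (2 * h)

/-- Vertex-to-center average. -/
noncomputable def Av (m : ℕ) [NeZero m]
    (ν : ZMod m × ZMod m → ℝ) : ZMod m × ZMod m → ℝ :=
  fun p => (ν p + ν (p.1 - 1, p.2) + ν (p.1, p.2 - 1) + ν (p.1 - 1, p.2 - 1)) / 4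

/-- The discrete energy `H_h`. -/
noncomputable def Hh (m : ℕ) [NeZero m] (h A : ℝ)
    (φ : ZMod m × ZMod m → ℝ) : ℝ :=
  A * h ^ 2 * ∑ p : ZMod m × ZMod m, φ p ^ 4 +
    A * h ^ 2 * ∑ p : ZMod m × ZMod m, (Dx m h φ p ^ 2 + Dy m h φ p ^ 2) ^ 2 +
    3 * h ^ 2 * ∑ p : ZMod m × ZMod m,
      φ p ^ 2 * Av m (fun q => Dx m h φ q ^ 2 + Dy m h φ q ^ 2) p

/-- The convex part `F_{c,h}` of the discrete FCH energy. -/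
noncomputable def Fch (m : ℕ) [NeZero m] (h ε η A : ℝ)
    (φ : ZMod m × ZMod m → ℝ) : ℝ :=
  h ^ 2 * ∑ p : ZMod m × ZMod m,
      ((ε ^ 2)⁻¹ / 2 * φ p ^ 6 + ((ε ^ 2)⁻¹ + η) / 2 * φ p ^ 2 +
        ε ^ 2 / 2 * discreteLaplacian m h φ p ^ 2) +
    Hh m h A φ

/-- The concave part `F_{e,h}` of the discrete FCH energy. -/
noncomputable def Feh (m : ℕ) [NeZero m] (h ε η A : ℝ)
    (φ : ZMod m × ZMod m → ℝ) : ℝ :=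
  h ^ 2 * ∑ p : ZMod m × ZMod m, ((ε ^ 2)⁻¹ + η / 4 + A) * φ p ^ 4 +
    (1 + η * ε ^ 2 / 2) * (h ^ 2 * ∑ p : ZMod m × ZMod m,
      (Dx m h φ p ^ 2 + Dy m h φ p ^ 2)) +
    A * (h ^ 2 * ∑ p : ZMod m × ZMod m, (Dx m h φ p ^ 2 + Dy m h φ p ^ 2) ^ 2)

/-!
A separable function `x ↦ ∑ᵢ gᵢ(xᵢ)` with every `gᵢ` strictly convex is strictly convex, and adding
a convex function keeps it so. The term `φ²` of `F_{c,h}` and the term `φ⁴` of `F_{e,h}` are of this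
kind; every other term is a nonnegative multiple of a sum of even powers of linear functions of `φ`,
except `H_h`. In `H_h`, shifting the periodic summation index moves the average `𝔄` onto `φ²`;
for `A = 1` this turns `H_h` into `h²/4` times a sum over the cells and their four corners `r` of
`φ(r)⁴ + 3 φ(r)² |∇φ|² + |∇φ|⁴`, where `∇φ = (𝔇ₓφ, 𝔇_yφ)` on the cell, and this quartic is a
nonnegative combination of fourth powers of linear forms. The excess `A - 1` multiplies
`∑ φ⁴ + ∑ |∇φ|⁴`, which is convex as well.
-/

section Convexity

variable {E : Type*} [AddCommGroup E] [Module ℝ E]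

theorem convexOn_sum {ι : Type*} {s : Set E} (hs : Convex ℝ s) (t : Finset ι)
    {f : ι → E → ℝ} (hf : ∀ i ∈ t, ConvexOn ℝ s (f i)) :
    ConvexOn ℝ s fun x => ∑ i ∈ t, f i x := by
  refine (Finset.sum_induction f (ConvexOn ℝ s) (fun _ _ => ConvexOn.add) (convexOn_const 0 hs)
    hf).congr fun x _ => ?_
  exact Finset.sum_apply x t f

theorem StrictConvexOn.const_mul {s : Set E} {f : E → ℝ} {c : ℝ} (hc : 0 < c)
    (hf : StrictConvexOn ℝ s f) : StrictConvexOn ℝ s fun x => c * f x := by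
  refine ⟨hf.1, fun x hx y hy hxy a b ha hb hab => ?_⟩
  calc c * f (a • x + b • y) < c * (a • f x + b • f y) :=
        mul_lt_mul_of_pos_left (hf.2 hx hy hxy ha hb hab) hc
    _ = a • (c * f x) + b • (c * f y) := by simp only [smul_eq_mul]; ring

theorem convexOn_pow_linearMap (ℓ : E →ₗ[ℝ] ℝ) {n : ℕ} (hn : Even n) :
    ConvexOn ℝ univ fun x => ℓ x ^ n := by
  simpa [Function.comp_def] using hn.convexOn_pow.comp_linearMap ℓ

def cornerDensity (x u v : ℝ) : ℝ :=
  x ^ 4 + 3 * x ^ 2 * (u ^ 2 + v ^ 2) + (u ^ 2 + v ^ 2) ^ 2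

-- `(a + b)⁴ + (a - b)⁴ = 2a⁴ + 12a²b² + 2b⁴`
theorem cornerDensity_eq (x u v : ℝ) :
    cornerDensity x u v =
      ((x + u) ^ 4 + (x - u) ^ 4 + ((x + v) ^ 4 + (x - v) ^ 4)) / 4 +
        ((u + v) ^ 4 + (u - v) ^ 4 + (u ^ 4 + v ^ 4)) / 6 := by
  unfold cornerDensity
  ring

theorem convexOn_cornerDensity (x u v : E →ₗ[ℝ] ℝ) :
    ConvexOn ℝ univ fun φ => cornerDensity (x φ) (u φ) (v φ) := by
  have q (ℓ : E →ₗ[ℝ] ℝ) : ConvexOn ℝ univ fun φ => ℓ φ ^ 4 :=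
    convexOn_pow_linearMap ℓ (by decide)
  have hx := (((q (x + u)).add (q (x - u))).add ((q (x + v)).add (q (x - v)))).smul
    (by norm_num : (0 : ℝ) ≤ 1 / 4)
  have huv := (((q (u + v)).add (q (u - v))).add ((q u).add (q v))).smul
    (by norm_num : (0 : ℝ) ≤ 1 / 6)
  refine (hx.add huv).congr fun φ _ => ?_
  simp only [cornerDensity_eq, Pi.add_apply, LinearMap.add_apply, LinearMap.sub_apply,
    smul_eq_mul]
  ring

end Convexity

theorem strictConvexOn_sum_apply {ι : Type*} [Fintype ι] {g : ι → ℝ → ℝ}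
    (hg : ∀ i, StrictConvexOn ℝ univ (g i)) :
    StrictConvexOn ℝ univ fun x : ι → ℝ => ∑ i, g i (x i) := by
  refine ⟨convex_univ, fun x _ y _ hxy a b ha hb hab => ?_⟩
  obtain ⟨i₀, hi₀⟩ := Function.ne_iff.mp hxy
  calc ∑ i, g i ((a • x + b • y) i) < ∑ i, (a • g i (x i) + b • g i (y i)) :=
        Finset.sum_lt_sum (fun i _ => (hg i).convexOn.2 trivial trivial ha.le hb.le hab)
          ⟨i₀, Finset.mem_univ _, (hg i₀).2 trivial trivial hi₀ ha hb hab⟩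
    _ = a • ∑ i, g i (x i) + b • ∑ i, g i (y i) := by
        simp only [Finset.sum_add_distrib, Finset.smul_sum]

theorem sum_mul_comp_sub {G R : Type*} [AddGroup G] [Fintype G] [NonUnitalNonAssocSemiring R]
    (f g : G → R) (d : G) : ∑ p, f p * g (p - d) = ∑ p, f (p + d) * g p :=
  (Fintype.sum_equiv (Equiv.addRight d) _ _ fun p => by simp).symm

section Grid

variable (m : ℕ) [NeZero m] (h : ℝ)

@[simps]
noncomputable def DxAt (q : ZMod m × ZMod m) : (ZMod m × ZMod m → ℝ) →ₗ[ℝ] ℝ where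
  toFun φ := Dx m h φ q
  map_add' φ ψ := by simp only [Dx, Pi.add_apply]; ring
  map_smul' c φ := by simp only [Dx, Pi.smul_apply, smul_eq_mul, RingHom.id_apply]; ring

@[simps]
noncomputable def DyAt (q : ZMod m × ZMod m) : (ZMod m × ZMod m → ℝ) →ₗ[ℝ] ℝ where
  toFun φ := Dy m h φ q
  map_add' φ ψ := by simp only [Dy, Pi.add_apply]; ring
  map_smul' c φ := by simp only [Dy, Pi.smul_apply, smul_eq_mul, RingHom.id_apply]; ring

@[simps]
noncomputable def discreteLaplacianAt (q : ZMod m × ZMod m) :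
    (ZMod m × ZMod m → ℝ) →ₗ[ℝ] ℝ where
  toFun φ := discreteLaplacian m h φ q
  map_add' φ ψ := by simp only [discreteLaplacian, Pi.add_apply]; ring
  map_smul' c φ := by
    simp only [discreteLaplacian, Pi.smul_apply, smul_eq_mul, RingHom.id_apply]; ring

noncomputable def cellEnergy (φ : ZMod m × ZMod m → ℝ) (q : ZMod m × ZMod m) : ℝ :=
  cornerDensity (φ q) (Dx m h φ q) (Dy m h φ q) +
    cornerDensity (φ (q + (1, 0))) (Dx m h φ q) (Dy m h φ q) +
    cornerDensity (φ (q + (0, 1))) (Dx m h φ q) (Dy m h φ q) +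
    cornerDensity (φ (q + (1, 1))) (Dx m h φ q) (Dy m h φ q)

theorem sum_mul_Av (φ ν : ZMod m × ZMod m → ℝ) :
    ∑ p, φ p * Av m ν p =
      (∑ q, φ q * ν q + ∑ q, φ (q + (1, 0)) * ν q + ∑ q, φ (q + (0, 1)) * ν q +
        ∑ q, φ (q + (1, 1)) * ν q) / 4 := by
  simp only [← sum_mul_comp_sub, ← Finset.sum_add_distrib, Finset.sum_div]
  refine Finset.sum_congr rfl fun ⟨i, j⟩ _ => ?_
  simp only [Av, Prod.mk_sub_mk, sub_zero]
  ring

theorem Hh_eq (A : ℝ) (φ : ZMod m × ZMod m → ℝ) :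
    Hh m h A φ = h ^ 2 / 4 * ∑ q, cellEnergy m h φ q +
      (A - 1) * h ^ 2 * ∑ p, (φ p ^ 4 + (Dx m h φ p ^ 2 + Dy m h φ p ^ 2) ^ 2) := by
  have hshift (d : ZMod m × ZMod m) : ∑ q, φ (q + d) ^ 4 = ∑ p, φ p ^ 4 :=
    Equiv.sum_comp (Equiv.addRight d) (fun p => φ p ^ 4)
  have hquartic : 4 * ∑ p, φ p ^ 4 = ∑ q, φ q ^ 4 + ∑ q, φ (q + (1, 0)) ^ 4 +
      ∑ q, φ (q + (0, 1)) ^ 4 + ∑ q, φ (q + (1, 1)) ^ 4 := by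
    rw [hshift, hshift, hshift]
    ring
  have hcell : ∑ q, cellEnergy m h φ q = 4 * ∑ p, φ p ^ 4 +
      12 * ∑ p, φ p ^ 2 * Av m (fun q => Dx m h φ q ^ 2 + Dy m h φ q ^ 2) p +
      4 * ∑ q, (Dx m h φ q ^ 2 + Dy m h φ q ^ 2) ^ 2 := by
    rw [hquartic, sum_mul_Av m (fun p => φ p ^ 2)]
    simp only [mul_div_assoc', Finset.mul_sum, ← Finset.sum_add_distrib, Finset.sum_div]
    exact Finset.sum_congr rfl fun q _ => by simp only [cellEnergy, cornerDensity]; ring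
  rw [Hh, hcell, Finset.sum_add_distrib]
  ring

theorem convexOn_Dx_sq_add_Dy_sq_sq (p : ZMod m × ZMod m) :
    ConvexOn ℝ univ fun φ => (Dx m h φ p ^ 2 + Dy m h φ p ^ 2) ^ 2 := by
  simpa [cornerDensity] using convexOn_cornerDensity 0 (DxAt m h p) (DyAt m h p)

theorem convexOn_Hh {A : ℝ} (hA : 1 ≤ A) : ConvexOn ℝ univ (Hh m h A) := by
  have hcell (q : ZMod m × ZMod m) : ConvexOn ℝ univ fun φ => cellEnergy m h φ q := by
    have corner (d : ZMod m × ZMod m) :=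
      convexOn_cornerDensity (LinearMap.proj (q + d)) (DxAt m h q) (DyAt m h q)
    refine ((((corner 0).add (corner (1, 0))).add (corner (0, 1))).add (corner (1, 1))).congr
      fun φ _ => ?_
    simp only [cellEnergy, Pi.add_apply, add_zero]
    rfl
  have hrest (p : ZMod m × ZMod m) :
      ConvexOn ℝ univ fun φ => φ p ^ 4 + (Dx m h φ p ^ 2 + Dy m h φ p ^ 2) ^ 2 :=
    (convexOn_pow_linearMap (LinearMap.proj (φ := fun _ => ℝ) p) (by decide)).add
      (convexOn_Dx_sq_add_Dy_sq_sq m h p)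
  refine (((convexOn_sum convex_univ Finset.univ fun q _ => hcell q).smul
    (by positivity : (0 : ℝ) ≤ h ^ 2 / 4)).add
      ((convexOn_sum convex_univ Finset.univ fun p _ => hrest p).smul
        (mul_nonneg (sub_nonneg.2 hA) (sq_nonneg h)))).congr fun φ _ => ?_
  simp only [Hh_eq, Pi.add_apply, smul_eq_mul]

variable {h} {ε η A : ℝ}

theorem strictConvexOn_Fch (hh : 0 < h) (hε : 0 < ε) (hη : 0 ≤ η) (hA : 1 ≤ A) :
    StrictConvexOn ℝ univ (Fch m h ε η A) := by
  have hc : 0 < ((ε ^ 2)⁻¹ + η) / 2 * h ^ 2 := by positivity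
  have hsq : StrictConvexOn ℝ univ fun φ : ZMod m × ZMod m → ℝ =>
      ((ε ^ 2)⁻¹ + η) / 2 * h ^ 2 * ∑ p, φ p ^ 2 :=
    (strictConvexOn_sum_apply fun _ => even_two.strictConvexOn_pow two_ne_zero).const_mul hc
  have hsixth : ConvexOn ℝ univ fun φ : ZMod m × ZMod m → ℝ => ∑ p, φ p ^ 6 :=
    convexOn_sum convex_univ Finset.univ fun p _ =>
      convexOn_pow_linearMap (LinearMap.proj (φ := fun _ => ℝ) p) (by decide)
  have hlap : ConvexOn ℝ univ fun φ => ∑ p, discreteLaplacian m h φ p ^ 2 :=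
    convexOn_sum convex_univ Finset.univ fun p _ =>
      convexOn_pow_linearMap (discreteLaplacianAt m h p) even_two
  refine (hsq.add_convexOn (((hsixth.smul (c := (ε ^ 2)⁻¹ / 2 * h ^ 2) (by positivity)).add
    (hlap.smul (c := ε ^ 2 / 2 * h ^ 2) (by positivity))).add (convexOn_Hh m h hA))).congr
      fun φ _ => ?_
  simp only [Fch, Pi.add_apply, smul_eq_mul, Finset.sum_add_distrib, ← Finset.mul_sum]
  ring

theorem strictConvexOn_Feh (hh : 0 < h) (hε : 0 < ε) (hη : 0 ≤ η) (hA : 1 ≤ A) :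
    StrictConvexOn ℝ univ (Feh m h ε η A) := by
  have hc : 0 < ((ε ^ 2)⁻¹ + η / 4 + A) * h ^ 2 := by positivity
  have hquartic : StrictConvexOn ℝ univ fun φ : ZMod m × ZMod m → ℝ =>
      ((ε ^ 2)⁻¹ + η / 4 + A) * h ^ 2 * ∑ p, φ p ^ 4 :=
    (strictConvexOn_sum_apply fun _ =>
      (even_two_mul 2).strictConvexOn_pow four_ne_zero).const_mul hc
  have hgrad : ConvexOn ℝ univ fun φ => ∑ p, (Dx m h φ p ^ 2 + Dy m h φ p ^ 2) :=
    convexOn_sum convex_univ Finset.univ fun p _ =>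
      (convexOn_pow_linearMap (DxAt m h p) even_two).add
        (convexOn_pow_linearMap (DyAt m h p) even_two)
  have hgrad2 : ConvexOn ℝ univ fun φ => ∑ p, (Dx m h φ p ^ 2 + Dy m h φ p ^ 2) ^ 2 :=
    convexOn_sum convex_univ Finset.univ fun p _ => convexOn_Dx_sq_add_Dy_sq_sq m h p
  refine (hquartic.add_convexOn
    ((hgrad.smul (c := (1 + η * ε ^ 2 / 2) * h ^ 2) (by positivity)).add
      (hgrad2.smul (c := A * h ^ 2) (by positivity)))).congr fun φ _ => ?_
  simp only [Feh, Pi.add_apply, smul_eq_mul, ← Finset.mul_sum]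
  ring

end Grid

theorem Fch_Feh_strictly_convex_general (m : ℕ) [NeZero m]
    (h ε η A : ℝ) (hh : 0 < h) (hε : 0 < ε) (hη : 0 ≤ η) (hA : 1 ≤ A) :
    StrictConvexOn ℝ (univ : Set (ZMod m × ZMod m → ℝ)) (Fch m h ε η A) ∧
      StrictConvexOn ℝ (univ : Set (ZMod m × ZMod m → ℝ)) (Feh m h ε η A) :=
  ⟨strictConvexOn_Fch m hh hε hη hA, strictConvexOn_Feh m hh hε hη hA⟩

theorem Fch_Feh_strictly_convex (m : ℕ) [NeZero m] (hm : 2 ≤ m)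
    (h ε η A : ℝ) (hh : 0 < h) (hε : 0 < ε) (hη : 0 ≤ η) (hA : 1 ≤ A) :
    StrictConvexOn ℝ (univ : Set (ZMod m × ZMod m → ℝ)) (Fch m h ε η A) ∧
      StrictConvexOn ℝ (univ : Set (ZMod m × ZMod m → ℝ)) (Feh m h ε η A) :=
  Fch_Feh_strictly_convex_general m h ε η A hh hε hη hA
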